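/- arXiv:1608.03222 — 6 statements merged into one kernel-verified Lean document; each statement's English description precedes it below -/
import Mathlib

section
/- Let T : ℝ → ℝ be twice differentiable and satisfy the Emden–Fowler equation T''(J) + d·J^n·T(J)^m = 0 on an interval where T(J) > 0, with n + m = -3 and m ≠ -1. Then the function I(J) = (1/2)(T'(J)·J − T(J))² + d·J^(n+2)·T(J)^(m+1)/(m+1) is constant on that interval. -/
/-!
Differentiating `I` and using `(n + 2) / (m + 1) = -1` gives
`I'(J) = (T'(J) J - T(J)) · J · (T''(J) + d J^n T(J)^m)`,
which vanishes along solutions; an open interval is connected, so `I` is constant there.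
-/

open Set

noncomputable def emdenFowlerFirstIntegral (d n m : ℝ) (T : ℝ → ℝ) (J : ℝ) : ℝ :=
  (1/2) * (deriv T J * J - T J) ^ 2 + d * J ^ (n + 2) * (T J) ^ (m + 1) / (m + 1)

theorem hasDerivAt_emdenFowlerFirstIntegral {T : ℝ → ℝ} {d n m x T'' : ℝ}
    (hnm : n + m = -3) (hm : m ≠ -1) (hx : x ≠ 0) (hTx : T x ≠ 0)
    (hT : DifferentiableAt ℝ T x) (hT' : HasDerivAt (deriv T) T'' x) :
    HasDerivAt (emdenFowlerFirstIntegral d n m T)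
      ((deriv T x * x - T x) * x * (T'' + d * x ^ n * T x ^ m)) x := by
  have hm1 : m + 1 ≠ 0 := fun h => hm (by linarith)
  have hlin : HasDerivAt (fun y => deriv T y * y - T y)
      (T'' * x + deriv T x * 1 - deriv T x) x :=
    (hT'.mul (hasDerivAt_id x)).sub hT.hasDerivAt
  have hpow : HasDerivAt (fun y : ℝ => y ^ (n + 2)) ((n + 2) * x ^ (n + 2 - 1)) x :=
    Real.hasDerivAt_rpow_const (Or.inl hx)
  have hTpow : HasDerivAt (fun y => T y ^ (m + 1)) (deriv T x * (m + 1) * T x ^ (m + 1 - 1)) x :=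
    hT.hasDerivAt.rpow_const (Or.inl hTx)
  refine (((hlin.pow 2).const_mul (1/2 : ℝ)).add
    (((hpow.const_mul d).mul hTpow).div_const (m + 1))).congr_deriv ?_
  have hxn₂ : x ^ (n + 2) = x ^ n * x * x := by
    rw [← Real.rpow_add_one hx, ← Real.rpow_add_one hx]
    ring_nf
  have hn : n + 2 = -(m + 1) := by linarith
  rw [show n + 2 - 1 = n + 1 by ring, add_sub_cancel_right, Real.rpow_add_one hx,
    Real.rpow_add_one hTx, hxn₂, hn]
  field_simp
  ring

/-- Noetherian first integral of the Emden–Fowler equation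
`T'' + d J^n T^m = 0` with `n + m = -3`, `m ≠ -1`:
`I(J) = (1/2)(T' J - T)^2 + d J^(n+2) T^(m+1)/(m+1)` is constant on an open
interval where `J > 0` and `T J > 0`. -/
theorem emden_fowler_first_integral
    (T : ℝ → ℝ) (d n m a b : ℝ)
    (hT : ContDiff ℝ 2 T)
    (hnm : n + m = -3) (hm : m ≠ -1)
    (hpos : ∀ J ∈ Set.Ioo a b, 0 < J ∧ 0 < T J)
    (hode : ∀ J ∈ Set.Ioo a b,
      deriv (deriv T) J + d * J ^ n * (T J) ^ m = 0) :
    ∀ J₁ ∈ Set.Ioo a b, ∀ J₂ ∈ Set.Ioo a b,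
      (1/2) * (deriv T J₁ * J₁ - T J₁) ^ 2
          + d * J₁ ^ (n + 2) * (T J₁) ^ (m + 1) / (m + 1)
        = (1/2) * (deriv T J₂ * J₂ - T J₂) ^ 2
          + d * J₂ ^ (n + 2) * (T J₂) ^ (m + 1) / (m + 1) := by
  have hT₁ : Differentiable ℝ T := hT.differentiable (by norm_num)
  have hT₂ : Differentiable ℝ (deriv T) := hT.differentiable_deriv_two
  have hderiv : ∀ J ∈ Ioo a b, HasDerivAt (emdenFowlerFirstIntegral d n m T) 0 J := by
    intro J hJ
    have h := hasDerivAt_emdenFowlerFirstIntegral (d := d) hnm hm (hpos J hJ).1.ne'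
      (hpos J hJ).2.ne' (hT₁ J) (hT₂ J).hasDerivAt
    rwa [hode J hJ, mul_zero] at h
  intro J₁ h₁ J₂ h₂
  exact isOpen_Ioo.is_const_of_deriv_eq_zero isPreconnected_Ioo
    (fun J hJ => (hderiv J hJ).differentiableAt.differentiableWithinAt)
    (fun J hJ => (hderiv J hJ).deriv) h₁ h₂
end

section
/- Let T : ℝ → ℝ be twice differentiable and satisfy T''(J) = J²·T(J)^(−5) on an open interval where T(J) > 0. Then I(J) = (J·T'(J) − T(J))² + J⁴/(2·T(J)⁴) is constant on that interval. -/
/-!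
Since `2 + (-5) + 3 = 0`, the substitution `u = T / J`, `t = -1 / J` turns `T'' = J² T⁻⁵` into
the autonomous equation `ü = u⁻⁵`, and `I = u̇² + u⁻⁴ / 2` is twice its energy. Directly: for any
twice differentiable `T` with `T(J) ≠ 0`, `I'(J) = 2 J (J T' - T) (T'' - J² / T⁵)`, which
vanishes along solutions, and an open interval is connected.
-/

noncomputable def emdenFowlerInvariant (T : ℝ → ℝ) (J : ℝ) : ℝ :=
  (J * deriv T J - T J) ^ 2 + J ^ 4 / (2 * T J ^ 4)

lemma hasDerivAt_mul_deriv_sub {T : ℝ → ℝ} {J T'' : ℝ} (hT : DifferentiableAt ℝ T J)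
    (hT' : HasDerivAt (deriv T) T'' J) :
    HasDerivAt (fun x => x * deriv T x - T x) (J * T'') J := by
  simpa using ((hasDerivAt_id' J).fun_mul hT').fun_sub hT.hasDerivAt

lemma hasDerivAt_emdenFowlerInvariant {T : ℝ → ℝ} {J T'' : ℝ} (hT : DifferentiableAt ℝ T J)
    (hT' : HasDerivAt (deriv T) T'' J) (hTJ : T J ≠ 0) :
    HasDerivAt (emdenFowlerInvariant T)
      (2 * J * (J * deriv T J - T J) * (T'' - J ^ 2 / T J ^ 5)) J := by
  have hsq : HasDerivAt (fun x => (x * deriv T x - T x) ^ 2)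
      (2 * (J * deriv T J - T J) * (J * T'')) J := by
    simpa using (hasDerivAt_mul_deriv_sub hT hT').fun_pow 2
  have hquot := (hasDerivAt_pow 4 J).fun_div ((hT.hasDerivAt.fun_pow 4).const_mul 2)
    (by positivity : 2 * T J ^ 4 ≠ 0)
  refine (hsq.add hquot).congr_deriv ?_
  field_simp
  ring

/-- for the Emden–Fowler equation `T'' = J² T^(-5)` on an open
interval where `T > 0`, `I(J) = (J T' - T)² + J⁴/(2 T⁴)` is constant. -/
theorem emden_fowler_m_neg5_first_integral
    (T : ℝ → ℝ) (a b : ℝ)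
    (hT : ContDiff ℝ 2 T)
    (hpos : ∀ J ∈ Set.Ioo a b, 0 < T J)
    (hode : ∀ J ∈ Set.Ioo a b, deriv (deriv T) J = J ^ 2 / (T J) ^ 5) :
    ∀ J₁ ∈ Set.Ioo a b, ∀ J₂ ∈ Set.Ioo a b,
      (J₁ * deriv T J₁ - T J₁) ^ 2 + J₁ ^ 4 / (2 * (T J₁) ^ 4)
        = (J₂ * deriv T J₂ - T J₂) ^ 2 + J₂ ^ 4 / (2 * (T J₂) ^ 4) := by
  have hderiv : ∀ J ∈ Set.Ioo a b, HasDerivAt (emdenFowlerInvariant T) 0 J := by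
    intro J hJ
    have h := hasDerivAt_emdenFowlerInvariant (hT.differentiable two_ne_zero J)
      (hT.differentiable_deriv_two J).hasDerivAt (hpos J hJ).ne'
    rwa [hode J hJ, sub_self, mul_zero] at h
  intro J₁ hJ₁ J₂ hJ₂
  exact isOpen_Ioo.is_const_of_deriv_eq_zero isPreconnected_Ioo
    (fun J hJ => (hderiv J hJ).differentiableAt.differentiableWithinAt)
    (fun J hJ => (hderiv J hJ).deriv) hJ₁ hJ₂
end

section
/- Suppose r, θ : ℝ → ℝ are twice differentiable, r(t) > 0, and satisfy the generalized Ermakov system r'' − r·θ'² = −w²·r + U(θ)/r³ and r·θ'' + 2·r'·θ' = −V'(θ)/r³, where V is differentiable. Then the Lewis–Ray–Reid invariant I(t) = (1/2)(r(t)²·θ'(t))² + V(θ(t)) is constant. -/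
/-- the Lewis–Ray–Reid invariant
`I(t) = (1/2)(r² θ')² + V(θ)` is constant for the generalized Ermakov system. -/
theorem lewis_ray_reid_invariant
    (r θ U V : ℝ → ℝ) (w : ℝ)
    (hr : ContDiff ℝ 2 r) (hθ : ContDiff ℝ 2 θ)
    (hV : Differentiable ℝ V)
    (hrpos : ∀ t, 0 < r t)
    (hrad : ∀ t, deriv (deriv r) t - r t * (deriv θ t) ^ 2
      = - w ^ 2 * r t + U (θ t) / (r t) ^ 3)
    (hang : ∀ t, r t * deriv (deriv θ) t + 2 * deriv r t * deriv θ t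
      = - deriv V (θ t) / (r t) ^ 3) :
    ∀ t₁ t₂ : ℝ,
      (1/2) * ((r t₁) ^ 2 * deriv θ t₁) ^ 2 + V (θ t₁)
        = (1/2) * ((r t₂) ^ 2 * deriv θ t₂) ^ 2 + V (θ t₂) := by
  have hrd : Differentiable ℝ r := hr.differentiable (by norm_num)
  have hθd : Differentiable ℝ θ := hθ.differentiable (by norm_num)
  have hθ'd : Differentiable ℝ (deriv θ) := by
    have : ContDiff ℝ 1 (deriv θ) := ((contDiff_succ_iff_deriv (n:=1)).mp hθ).2.2
    exact this.differentiable (by norm_num)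
  have key : ∀ t, HasDerivAt
      (fun t => (1/2) * ((r t) ^ 2 * deriv θ t) ^ 2 + V (θ t)) 0 t := by
    intro t
    have h1 : HasDerivAt r (deriv r t) t := (hrd t).hasDerivAt
    have h2 : HasDerivAt θ (deriv θ t) t := (hθd t).hasDerivAt
    have h3 : HasDerivAt (deriv θ) (deriv (deriv θ) t) t := (hθ'd t).hasDerivAt
    have h4 : HasDerivAt V (deriv V (θ t)) (θ t) := (hV (θ t)).hasDerivAt
    have hD : HasDerivAt (fun t => (1/2) * ((r t) ^ 2 * deriv θ t) ^ 2 + V (θ t))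
        ((1/2) * (2 * ((r t) ^ 2 * deriv θ t) ^ 1 *
          ((2 * r t ^ 1 * deriv r t) * deriv θ t + (r t) ^ 2 * deriv (deriv θ) t))
          + deriv V (θ t) * deriv θ t) t := by
      exact (((((h1.pow 2).mul h3).pow 2).const_mul (1/2)).add (h4.comp t h2))
    have hne : r t ≠ 0 := (hrpos t).ne'
    have hVθ : deriv V (θ t) = -((r t)^3 * (r t * deriv (deriv θ) t + 2 * deriv r t * deriv θ t)) := by
      have := hang t
      field_simp at this ⊢
      linarith
    convert hD using 1
    rw [hVθ]; ring
  intro t₁ t₂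
  have := is_const_of_deriv_eq_zero (f := fun t => (1/2) * ((r t) ^ 2 * deriv θ t) ^ 2 + V (θ t))
    (fun t => ((key t).differentiableAt)) (fun t => (key t).deriv) t₁ t₂
  simpa using this
end

section
/- Suppose r, θ : ℝ → ℝ are twice differentiable with r(t) > 0 and satisfy r'' − r·θ'² = 0 and r·θ'' + 2·r'·θ' = sin(θ)/r³. Then I(t) = (1/2)(r(t)²·θ'(t))² + cos(θ(t)) is constant. -/
open Real

noncomputable def sinForceInvariant (r θ : ℝ → ℝ) (t : ℝ) : ℝ :=
  (1/2) * ((r t) ^ 2 * deriv θ t) ^ 2 + cos (θ t)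

theorem hasDerivAt_sq_mul {r ω : ℝ → ℝ} {r' ω' t : ℝ} (hr : HasDerivAt r r' t)
    (hω : HasDerivAt ω ω' t) :
    HasDerivAt (fun s => r s ^ 2 * ω s) (r t * (r t * ω' + 2 * r' * ω t)) t := by
  refine ((hr.fun_pow 2).fun_mul hω).congr_deriv ?_
  ring

/-- The angular momentum `L = r² θ'` has `L' = r (r θ'' + 2 r' θ') = sin θ / r²` by the angular
equation, so `(L² / 2)' = θ' sin θ` exactly cancels the derivative of `cos θ`. -/
theorem hasDerivAt_sinForceInvariant {r θ : ℝ → ℝ} {t : ℝ} (hr : DifferentiableAt ℝ r t)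
    (hθ : DifferentiableAt ℝ θ t) (hθ' : DifferentiableAt ℝ (deriv θ) t) (hrt : r t ≠ 0)
    (hang : r t * deriv (deriv θ) t + 2 * deriv r t * deriv θ t = sin (θ t) / r t ^ 3) :
    HasDerivAt (sinForceInvariant r θ) 0 t := by
  have hL := hasDerivAt_sq_mul hr.hasDerivAt hθ'.hasDerivAt
  rw [hang] at hL
  refine (((hL.fun_pow 2).const_mul (1/2)).add
    ((hasDerivAt_cos _).comp t hθ.hasDerivAt)).congr_deriv ?_
  field_simp
  ring

theorem lrr_invariant_sin_force_general
    (r θ : ℝ → ℝ)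
    (hr : ContDiff ℝ 2 r) (hθ : ContDiff ℝ 2 θ)
    (hrpos : ∀ t, 0 < r t)
    (hang : ∀ t, r t * deriv (deriv θ) t + 2 * deriv r t * deriv θ t
      = Real.sin (θ t) / (r t) ^ 3) :
    ∀ t₁ t₂ : ℝ,
      (1/2) * ((r t₁) ^ 2 * deriv θ t₁) ^ 2 + Real.cos (θ t₁)
        = (1/2) * ((r t₂) ^ 2 * deriv θ t₂) ^ 2 + Real.cos (θ t₂) := by
  have hr' : Differentiable ℝ r := hr.differentiable (by norm_num)
  have hθ' : Differentiable ℝ θ := hθ.differentiable (by norm_num)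
  have hθ'' : Differentiable ℝ (deriv θ) := hθ.differentiable_deriv_two
  have hI t : HasDerivAt (sinForceInvariant r θ) 0 t :=
    hasDerivAt_sinForceInvariant (hr' t) (hθ' t) (hθ'' t) (hrpos t).ne' (hang t)
  exact is_const_of_deriv_eq_zero (fun t => (hI t).differentiableAt) (fun t => (hI t).deriv)

/-- for planar motion under the curl force `F = (sin θ / r³) e_θ`,
`I(t) = (1/2)(r² θ')² + cos θ` is constant. -/
theorem lrr_invariant_sin_force
    (r θ : ℝ → ℝ)
    (hr : ContDiff ℝ 2 r) (hθ : ContDiff ℝ 2 θ)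
    (hrpos : ∀ t, 0 < r t)
    (hrad : ∀ t, deriv (deriv r) t - r t * (deriv θ t) ^ 2 = 0)
    (hang : ∀ t, r t * deriv (deriv θ) t + 2 * deriv r t * deriv θ t
      = Real.sin (θ t) / (r t) ^ 3) :
    ∀ t₁ t₂ : ℝ,
      (1/2) * ((r t₁) ^ 2 * deriv θ t₁) ^ 2 + Real.cos (θ t₁)
        = (1/2) * ((r t₂) ^ 2 * deriv θ t₂) ^ 2 + Real.cos (θ t₂) :=
  lrr_invariant_sin_force_general r θ hr hθ hrpos hang
end

section
/- For λ ≠ −1 and σ = 1 + 4λ, the function Y(z) = Y₀·z^(λ/(1+λ)) with Y₀ > 0 and z > 0 satisfies Y'·Y''' − (Y'' + (Y')^(2+λ))·Y'' − Y²·(Y')^(σ+3) = 0 if and only if λ^(−2)·(λY₀)^(4+4λ) − (λY₀)^(1+λ)·(1+λ)^(3λ) − (1+λ)^(1+4λ) = 0. -/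
/-!
With `p = λ/(1+λ)` one has `(p - 1)(2 + λ) = p - 2` and `(p - 1)(σ + 3) = -4`, so every term of the
equation evaluated on `Y = Y₀ z^p` is `z^(2p-4)` times its value at `z = 1`. The equation therefore
holds on `(0,∞)` iff it holds at `z = 1`, and there the left-hand side is
`-(λY₀)² (1+λ)^(-4-4λ)` times the expression in the condition on `Y₀`.
-/

open Real

noncomputable def curlResidual (l σ y₀ y₁ y₂ y₃ : ℝ) : ℝ :=
  y₁ * y₃ - (y₂ + y₁ ^ (2 + l)) * y₂ - y₀ ^ 2 * y₁ ^ (σ + 3)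

theorem iter_deriv_const_mul_rpow (c p x : ℝ) (k : ℕ) :
    deriv^[k] (fun x : ℝ => c * x ^ p) x = c * (descPochhammer ℝ k).eval p * x ^ (p - k) := by
  rw [← iteratedDeriv_eq_iterate, iteratedDeriv_const_mul_field, iteratedDeriv_eq_iterate,
    iter_deriv_rpow_const, mul_assoc]

theorem iter_deriv_const_mul_rpow_eq_rpow_mul (c p x : ℝ) (k : ℕ) :
    deriv^[k] (fun x : ℝ => c * x ^ p) x = x ^ (p - k) * deriv^[k] (fun x : ℝ => c * x ^ p) 1 := by
  rw [iter_deriv_const_mul_rpow, iter_deriv_const_mul_rpow, one_rpow, mul_one, mul_comm]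

theorem rpow_natCast_mul_sub {b : ℝ} (hb : 0 < b) (s : ℝ) (k m : ℕ) :
    b ^ (k * s - m) = (b ^ s) ^ k / b ^ m := by
  rw [rpow_sub hb, rpow_natCast, mul_comm, rpow_mul hb.le, rpow_natCast]

theorem curlResidual_rpow_mul {l σ p z b₀ b₁ b₂ b₃ : ℝ} (hz : 0 < z) (hb₁ : 0 ≤ b₁)
    (h₂ : (p - 1) * (2 + l) = p - 2) (h₄ : (p - 1) * (σ + 3) = -4) :
    curlResidual l σ (z ^ p * b₀) (z ^ (p - 1) * b₁) (z ^ (p - 2) * b₂) (z ^ (p - 3) * b₃)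
      = z ^ (2 * p - 4) * curlResidual l σ b₀ b₁ b₂ b₃ := by
  have hpow : ∀ q, (z ^ (p - 1) * b₁) ^ q = z ^ ((p - 1) * q) * b₁ ^ q := fun q => by
    rw [mul_rpow (rpow_nonneg hz.le _) hb₁, ← rpow_mul hz.le]
  rw [curlResidual, curlResidual, hpow, hpow, h₂, h₄, show 2 * p - 4 = p * 2 - 4 by ring,
    rpow_sub hz (p * 2), rpow_mul hz.le]
  simp only [rpow_sub hz, rpow_neg hz.le, rpow_one, rpow_ofNat]
  field_simp

theorem curlResidual_power_at_one {l Y₀ : ℝ} (hs : 0 < 1 + l) (hx : 0 < l * Y₀) :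
    let F := fun z : ℝ => Y₀ * z ^ (l / (1 + l))
    curlResidual l (1 + 4 * l) (F 1) (deriv^[1] F 1) (deriv^[2] F 1) (deriv^[3] F 1)
      = -((l * Y₀) ^ 2 / (1 + l) ^ (4 + 4 * l)) * ((l * Y₀) ^ (4 + 4 * l) / l ^ 2
          - (l * Y₀) ^ (1 + l) * (1 + l) ^ (3 * l) - (1 + l) ^ (1 + 4 * l)) := by
  intro F
  have hl : l ≠ 0 := left_ne_zero_of_mul hx.ne'
  have hA : Y₀ * (l / (1 + l)) = l * Y₀ / (1 + l) := by field_simp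
  have hA₀ : 0 < l * Y₀ / (1 + l) := by positivity
  have hA_pow : (l * Y₀ / (1 + l)) ^ (2 + l) = l * Y₀ / (1 + l) * (l * Y₀ / (1 + l)) ^ (1 + l) := by
    rw [show 2 + l = 1 + (1 + l) by ring, rpow_add hA₀, rpow_one]
  have hpow_four : ∀ b : ℝ, 0 < b → b ^ (4 + 4 * l) = (b ^ (1 + l)) ^ 4 := fun b hb => by
    rw [← rpow_natCast, ← rpow_mul hb.le]; congr 1; push_cast; ring
  have hs_pow₃ : (1 + l) ^ (3 * l) = ((1 + l) ^ (1 + l)) ^ 3 / (1 + l) ^ 3 := by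
    rw [← rpow_natCast_mul_sub hs]; congr 1; push_cast; ring
  have hs_pow₄ : (1 + l) ^ (1 + 4 * l) = ((1 + l) ^ (1 + l)) ^ 4 / (1 + l) ^ 3 := by
    rw [← rpow_natCast_mul_sub hs]; congr 1; push_cast; ring
  simp only [F, iter_deriv_const_mul_rpow, one_rpow, descPochhammer_succ_right, descPochhammer_zero,
    Polynomial.eval_mul, Polynomial.eval_sub, Polynomial.eval_X, Polynomial.eval_ofNat,
    Polynomial.eval_one, Nat.cast_ofNat, Nat.cast_zero, Nat.cast_one, one_mul, mul_one, sub_zero,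
    curlResidual, show 1 + 4 * l + 3 = 4 + 4 * l by ring, ← mul_assoc, hA]
  -- After this the only real powers left are `(λY₀)^(1+λ)` and `(1+λ)^(1+λ)`.
  rw [hA_pow, hpow_four _ hA₀, hpow_four _ hx, hpow_four _ hs, hs_pow₃, hs_pow₄,
    div_rpow hx.le hs.le]
  field_simp
  ring

theorem curlResidual_power_eq_rpow_mul {l Y₀ z : ℝ} (hs : 0 < 1 + l) (hx : 0 < l * Y₀)
    (hz : 0 < z) :
    let F := fun z : ℝ => Y₀ * z ^ (l / (1 + l))
    curlResidual l (1 + 4 * l) (F z) (deriv^[1] F z) (deriv^[2] F z) (deriv^[3] F z)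
      = z ^ (2 * (l / (1 + l)) - 4)
        * curlResidual l (1 + 4 * l) (F 1) (deriv^[1] F 1) (deriv^[2] F 1) (deriv^[3] F 1) := by
  intro F
  have hF : ∀ k : ℕ, deriv^[k] F z = z ^ (l / (1 + l) - k) * deriv^[k] F 1 :=
    iter_deriv_const_mul_rpow_eq_rpow_mul _ _ z
  have hF₁ : 0 ≤ deriv^[1] F 1 := by
    simp only [F, iter_deriv_const_mul_rpow, descPochhammer_one, Polynomial.eval_X, one_rpow]
    rw [show Y₀ * (l / (1 + l)) = l * Y₀ / (1 + l) by ring]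
    positivity
  have h₂ : (l / (1 + l) - 1) * (2 + l) = l / (1 + l) - 2 := by field_simp; ring
  have h₄ : (l / (1 + l) - 1) * (1 + 4 * l + 3) = -4 := by field_simp; ring
  rw [show F z = deriv^[0] F z from rfl, hF 0, hF 1, hF 2, hF 3]
  push_cast
  rw [sub_zero]
  exact curlResidual_rpow_mul hz hF₁ h₂ h₄

theorem third_order_power_solution_general
    (l σ Y₀ : ℝ) (hσ : σ = 1 + 4 * l)
    (hlY₀ : 0 < l * Y₀) (hl1 : 0 < 1 + l) :
    (∀ z : ℝ, 0 < z →
        deriv (fun z : ℝ => Y₀ * z ^ (l / (1 + l))) z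
            * deriv (deriv (deriv (fun z : ℝ => Y₀ * z ^ (l / (1 + l))))) z
          - (deriv (deriv (fun z : ℝ => Y₀ * z ^ (l / (1 + l)))) z
              + (deriv (fun z : ℝ => Y₀ * z ^ (l / (1 + l))) z) ^ (2 + l))
            * deriv (deriv (fun z : ℝ => Y₀ * z ^ (l / (1 + l)))) z
          - (Y₀ * z ^ (l / (1 + l))) ^ 2
            * (deriv (fun z : ℝ => Y₀ * z ^ (l / (1 + l))) z) ^ (σ + 3) = 0)
      ↔ (l * Y₀) ^ (4 + 4 * l) / l ^ 2
          - (l * Y₀) ^ (1 + l) * (1 + l) ^ (3 * l)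
          - (1 + l) ^ (1 + 4 * l) = 0 := by
  subst hσ
  set F := fun z : ℝ => Y₀ * z ^ (l / (1 + l))
  change (∀ z : ℝ, 0 < z → curlResidual l (1 + 4 * l) (F z) (deriv^[1] F z) (deriv^[2] F z)
    (deriv^[3] F z) = 0) ↔ _
  have hK : -((l * Y₀) ^ 2 / (1 + l) ^ (4 + 4 * l)) ≠ 0 := neg_ne_zero.mpr (by positivity)
  constructor
  · intro h
    have h₁ := (curlResidual_power_at_one hl1 hlY₀).symm.trans (h 1 one_pos)
    exact (mul_eq_zero.mp h₁).resolve_left hK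
  · intro h z hz
    rw [curlResidual_power_eq_rpow_mul hl1 hlY₀ hz, curlResidual_power_at_one hl1 hlY₀, h,
      mul_zero, mul_zero]

/-- `Y(z) = Y₀ z^(λ/(1+λ))` solves the autonomous third-order
equation `Y' Y''' − (Y'' + (Y')^(2+λ)) Y'' − Y² (Y')^(σ+3) = 0` on `(0,∞)`
(with `σ = 1 + 4λ`) iff
`λ⁻² (λY₀)^(4+4λ) − (λY₀)^(1+λ) (1+λ)^(3λ) − (1+λ)^(1+4λ) = 0`. -/
theorem third_order_power_solution
    (l σ Y₀ : ℝ) (hl0 : l ≠ 0) (hl : l ≠ -1) (hσ : σ = 1 + 4 * l)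
    (hY₀ : 0 < Y₀) (hlY₀ : 0 < l * Y₀) (hl1 : 0 < 1 + l) :
    (∀ z : ℝ, 0 < z →
        deriv (fun z : ℝ => Y₀ * z ^ (l / (1 + l))) z
            * deriv (deriv (deriv (fun z : ℝ => Y₀ * z ^ (l / (1 + l))))) z
          - (deriv (deriv (fun z : ℝ => Y₀ * z ^ (l / (1 + l)))) z
              + (deriv (fun z : ℝ => Y₀ * z ^ (l / (1 + l))) z) ^ (2 + l))
            * deriv (deriv (fun z : ℝ => Y₀ * z ^ (l / (1 + l)))) z
          - (Y₀ * z ^ (l / (1 + l))) ^ 2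
            * (deriv (fun z : ℝ => Y₀ * z ^ (l / (1 + l))) z) ^ (σ + 3) = 0)
      ↔ (l * Y₀) ^ (4 + 4 * l) / l ^ 2
          - (l * Y₀) ^ (1 + l) * (1 + l) ^ (3 * l)
          - (1 + l) ^ (1 + 4 * l) = 0 :=
  third_order_power_solution_general l σ Y₀ hσ hlY₀ hl1
end

section
/- Let λ ≠ 0 and σ = 1 + 4λ. The vector field G̃₃ = λ·J̃·∂_J̃ − T̃·∂_T̃ is a Lie point symmetry of the equation T̃'' − T̃'·T̃^λ = J̃²·T̃^σ; concretely, if T̃(J̃) is a solution with T̃ > 0 on (0,∞), then for every ε, the scaled function T̃_ε(J̃) = e^(−ε)·T̃(e^(−λε)·J̃) is again a solution. -/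
lemma scale_deriv (f : ℝ → ℝ) (hf : Differentiable ℝ f) (a c : ℝ) :
    deriv (fun x => a * f (c * x)) = fun x => a * c * deriv f (c * x) := by
  funext x
  have h1 : HasDerivAt (fun x : ℝ => c * x) c x := by
    simpa using (hasDerivAt_id x).const_mul c
  have h2 : HasDerivAt f (deriv f (c * x)) (c * x) := (hf (c * x)).hasDerivAt
  have h : HasDerivAt (fun x => a * f (c * x)) (a * (deriv f (c * x) * c)) x :=
    (h2.comp x h1).const_mul a
  rw [h.deriv]; ring

/-- the scaling `T̃_ε(J̃) = e^(−ε) T̃(e^(−λε) J̃)` maps solutions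
of `T̃'' − T̃' T̃^λ = J̃² T̃^σ` (with `σ = 1 + 4λ`) to solutions: the Lie point
symmetry `G̃₃ = λ J̃ ∂_J̃ − T̃ ∂_T̃`. -/
theorem dissipative_scaling_symmetry
    (T : ℝ → ℝ) (l σ : ℝ) (hl : l ≠ 0) (hσ : σ = 1 + 4 * l)
    (hT : ContDiff ℝ 2 T)
    (hTpos : ∀ J : ℝ, 0 < J → 0 < T J)
    (hsol : ∀ J : ℝ, 0 < J →
      deriv (deriv T) J - deriv T J * (T J) ^ l = J ^ 2 * (T J) ^ σ) :
    ∀ ε : ℝ, ∀ J : ℝ, 0 < J →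
      deriv (deriv (fun J : ℝ => Real.exp (-ε) * T (Real.exp (-(l * ε)) * J))) J
          - deriv (fun J : ℝ => Real.exp (-ε) * T (Real.exp (-(l * ε)) * J)) J
            * (Real.exp (-ε) * T (Real.exp (-(l * ε)) * J)) ^ l
        = J ^ 2 * (Real.exp (-ε) * T (Real.exp (-(l * ε)) * J)) ^ σ := by
  intro ε J hJ
  have hTdiff : Differentiable ℝ T := hT.differentiable (by norm_num)
  have hT2 : ContDiff ℝ (1 + 1) T := by norm_num; exact hT
  have hT'diff : Differentiable ℝ (deriv T) :=
    ((contDiff_succ_iff_deriv.mp hT2).2.2).differentiable (by norm_num)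
  set a := Real.exp (-ε) with ha
  set c := Real.exp (-(l * ε)) with hc
  have h1 : deriv (fun J : ℝ => a * T (c * J)) = fun x => a * c * deriv T (c * x) :=
    scale_deriv T hTdiff a c
  have h2 : deriv (fun x : ℝ => a * c * deriv T (c * x))
      = fun x => a * c * c * deriv (deriv T) (c * x) := by
    have := scale_deriv (deriv T) hT'diff (a * c) c
    funext x
    rw [this]
  rw [h1, h2]
  set u := c * J with hu
  have hupos : 0 < u := mul_pos (Real.exp_pos _) hJ
  have hTu : 0 < T u := hTpos u hupos
  have key := hsol u hupos
  have hmul : ∀ p : ℝ, (a * T u) ^ p = a ^ p * T u ^ p :=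
    fun p => Real.mul_rpow (le_of_lt (Real.exp_pos _)) hTu.le
  have hal : a ^ l = c := by
    rw [ha, hc, ← Real.exp_mul]; ring_nf
  have haσ : a ^ σ = a * c * c * c * c := by
    rw [ha, hc, ← Real.exp_mul, ← Real.exp_add, ← Real.exp_add, ← Real.exp_add,
      ← Real.exp_add]
    congr 1; rw [hσ]; ring
  rw [hmul, hmul, hal, haσ]
  have hu2 : u ^ 2 = c ^ 2 * J ^ 2 := by rw [hu]; ring
  have : deriv (deriv T) u = deriv T u * T u ^ l + u ^ 2 * T u ^ σ := by linarith
  show a * c * c * deriv (deriv T) u - a * c * deriv T u * (c * T u ^ l)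
      = J ^ 2 * (a * c * c * c * c * T u ^ σ)
  rw [this, hu2]
  ring
end
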